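/- arXiv:1001.1475 — 2 statements merged into one kernel-verified Lean document; each statement's English description precedes it below -/
import Mathlib

section
/- Let G be a profinite group topologically generated by a finite subset X, let Φ₀ : G → G be a continuous group homomorphism with Φ₀ ∘ Φ₀ = Φ₀, let T be a profinite group, and let π : G → T be a continuous surjective group homomorphism satisfying π ∘ Φ₀ = π. Let N be the smallest closed normal subgroup of G containing {Φ₀(x)·x⁻¹ : x ∈ X}. Then the following are equivalent: (i) N = ker π; (ii) ker π ⊆ ker Φ₀; (iii) ker π = ker Φ₀. -/
/-!
Since `Φ₀` is idempotent, every `Φ₀ x * x⁻¹` lies in `ker Φ₀`, so `N ≤ ker Φ₀`. Conversely the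
`g` with `Φ₀ g * g⁻¹ ∈ N` form a closed subgroup (as `N` is closed and normal) containing `X`,
hence all of `G`; for `g ∈ ker Φ₀` this says `g⁻¹ ∈ N`. Thus `N = ker Φ₀`, and `π ∘ Φ₀ = π`
gives `ker Φ₀ ≤ ker π`, from which the three conditions are visibly equivalent.
-/

namespace Subgroup

variable {G H : Type*} [Group G] [TopologicalSpace G] [IsTopologicalGroup G]
  [Group H] [TopologicalSpace H] [IsTopologicalGroup H]

theorem mul_inv_mem_of_mem_topologicalClosure_closure {f g : G →* H} (hf : Continuous f)
    (hg : Continuous g) {N : Subgroup H} [N.Normal] (hN : IsClosed (N : Set H)) {X : Set G}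
    (hX : ∀ x ∈ X, f x * (g x)⁻¹ ∈ N) {y : G} (hy : y ∈ (closure X).topologicalClosure) :
    f y * (g y)⁻¹ ∈ N := by
  let E := ((QuotientGroup.mk' N).comp f).eqLocus ((QuotientGroup.mk' N).comp g)
  have hmemE : ∀ z, z ∈ E ↔ f z * (g z)⁻¹ ∈ N := fun z => by
    change ((f z : H ⧸ N) = g z) ↔ _
    rw [QuotientGroup.eq_iff_div_mem, div_eq_mul_inv]
  have hEclosed : IsClosed (E : Set G) := by
    have hE : (E : Set G) = (fun z => f z * (g z)⁻¹) ⁻¹' N := Set.ext hmemE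
    exact hE ▸ hN.preimage (hf.mul hg.inv)
  have hXE : closure X ≤ E := (closure_le E).2 fun x hx => (hmemE x).2 (hX x hx)
  exact (hmemE y).1 (topologicalClosure_minimal _ hXE hEclosed hy)

end Subgroup

namespace MonoidHom

theorem isClosed_ker {G M : Type*} [Group G] [TopologicalSpace G] [MulOneClass M]
    [TopologicalSpace M] [T1Space M] (f : G →* M) (hf : Continuous f) :
    IsClosed (f.ker : Set G) :=
  f.coe_ker ▸ isClosed_singleton.preimage hf

variable {G : Type*} [Group G] [TopologicalSpace G] [IsTopologicalGroup G]

theorem ker_le_topologicalClosure_normalClosure {Φ : G →* G} (hΦ : Continuous Φ) {X : Set G}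
    (hX : (Subgroup.closure X).topologicalClosure = ⊤) :
    Φ.ker ≤ (Subgroup.normalClosure ((fun x => Φ x * x⁻¹) '' X)).topologicalClosure := by
  intro g hg
  set N := (Subgroup.normalClosure ((fun x => Φ x * x⁻¹) '' X)).topologicalClosure
  have : N.Normal := Subgroup.is_normal_topologicalClosure _
  have hmem : Φ g * (MonoidHom.id G g)⁻¹ ∈ N :=
    Subgroup.mul_inv_mem_of_mem_topologicalClosure_closure (g := MonoidHom.id G) hΦ continuous_id
      (Subgroup.isClosed_topologicalClosure _)
      (fun x hx => Subgroup.le_topologicalClosure _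
        (Subgroup.subset_normalClosure (Set.mem_image_of_mem _ hx)))
      (by rw [hX]; exact Subgroup.mem_top g)
  simpa [(Φ.mem_ker).1 hg] using hmem

theorem topologicalClosure_normalClosure_le_ker [T1Space G] {Φ : G →* G} (hΦ : Continuous Φ)
    (hΦ_idem : Φ.comp Φ = Φ) (X : Set G) :
    (Subgroup.normalClosure ((fun x => Φ x * x⁻¹) '' X)).topologicalClosure ≤ Φ.ker := by
  refine Subgroup.topologicalClosure_minimal _ ?_ (Φ.isClosed_ker hΦ)
  refine Subgroup.normalClosure_le_normal ?_
  rintro _ ⟨x, -, rfl⟩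
  simpa [mul_inv_eq_one] using DFunLike.congr_fun hΦ_idem x

theorem topologicalClosure_normalClosure_eq_ker [T1Space G] {Φ : G →* G} (hΦ : Continuous Φ)
    (hΦ_idem : Φ.comp Φ = Φ) {X : Set G} (hX : (Subgroup.closure X).topologicalClosure = ⊤) :
    (Subgroup.normalClosure ((fun x => Φ x * x⁻¹) '' X)).topologicalClosure = Φ.ker :=
  le_antisymm (topologicalClosure_normalClosure_le_ker hΦ hΦ_idem X)
    (ker_le_topologicalClosure_normalClosure hΦ hX)

end MonoidHom

theorem stmt1_general {G T : Type*}
    [Group G] [TopologicalSpace G] [IsTopologicalGroup G]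
    [T2Space G]
    [Group T]
    (X : Set G) (hX : (Subgroup.closure X).topologicalClosure = ⊤)
    (Φ₀ : G →* G) (hΦ₀_cont : Continuous Φ₀) (hΦ₀_idem : Φ₀.comp Φ₀ = Φ₀)
    (π : G →* T)
    (hπΦ₀ : π.comp Φ₀ = π) :
    List.TFAE
      [(Subgroup.normalClosure ((fun x => Φ₀ x * x⁻¹) '' X)).topologicalClosure = π.ker,
       π.ker ≤ Φ₀.ker,
       π.ker = Φ₀.ker] := by
  rw [MonoidHom.topologicalClosure_normalClosure_eq_ker hΦ₀_cont hΦ₀_idem hX]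
  have hker : Φ₀.ker ≤ π.ker := hπΦ₀ ▸ Φ₀.ker_le_comap π.ker
  tfae_have 1 ↔ 3 := eq_comm
  tfae_have 2 ↔ 3 := ⟨fun h => le_antisymm h hker, le_of_eq⟩
  tfae_finish

/-- Let `G` be a profinite group topologically generated by a finite subset `X`,
`Φ₀ : G → G` a continuous idempotent endomorphism, `T` a profinite group, and `π : G → T`
a continuous surjective homomorphism with `π ∘ Φ₀ = π`.  Let `N` be the smallest closed normal
subgroup of `G` containing `{Φ₀(x) * x⁻¹ : x ∈ X}`.  Then the following are equivalent:
`N = ker π`; `ker π ⊆ ker Φ₀`; `ker π = ker Φ₀`. -/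
theorem stmt1 {G T : Type*}
    [Group G] [TopologicalSpace G] [IsTopologicalGroup G]
    [CompactSpace G] [T2Space G] [TotallyDisconnectedSpace G]
    [Group T] [TopologicalSpace T] [IsTopologicalGroup T]
    [CompactSpace T] [T2Space T] [TotallyDisconnectedSpace T]
    (X : Set G) (hXfin : X.Finite) (hX : (Subgroup.closure X).topologicalClosure = ⊤)
    (Φ₀ : G →* G) (hΦ₀_cont : Continuous Φ₀) (hΦ₀_idem : Φ₀.comp Φ₀ = Φ₀)
    (π : G →* T) (hπ_cont : Continuous π) (hπ_surj : Function.Surjective π)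
    (hπΦ₀ : π.comp Φ₀ = π) :
    List.TFAE
      [(Subgroup.normalClosure ((fun x => Φ₀ x * x⁻¹) '' X)).topologicalClosure = π.ker,
       π.ker ≤ Φ₀.ker,
       π.ker = Φ₀.ker] :=
  stmt1_general X hX Φ₀ hΦ₀_cont hΦ₀_idem π hπΦ₀
end

section
/- Let F be a profinite group topologically generated by a subset X, and let Φ₀ : F → F be a continuous group homomorphism with Φ₀ ∘ Φ₀ = Φ₀ (a retraction of F). Then the kernel of Φ₀ equals the smallest closed normal subgroup of F containing the set {Φ₀(x)·x⁻¹ : x ∈ X}. -/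
/-!
Both sides are closed normal subgroups. The generators `Φ₀ x * x⁻¹` lie in the kernel because
`Φ₀` is idempotent, and the kernel is closed. Conversely, modulo the closed normal subgroup `N`
on the right, the continuous homomorphisms `Φ₀` and `id` agree on `X`, hence on the closed
subgroup topologically generated by `X`, which is all of `F`; so `Φ₀ g = 1` forces `g ∈ N`.
-/

namespace MonoidHom

theorem eqOn_topologicalClosure_closure {G H : Type*} [Group G] [TopologicalSpace G]
    [IsTopologicalGroup G] [Group H] [TopologicalSpace H] [T2Space H] {f g : G →* H}
    (hf : Continuous f) (hg : Continuous g) {s : Set G} (h : Set.EqOn f g s) :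
    Set.EqOn f g (Subgroup.closure s).topologicalClosure := by
  rw [Subgroup.topologicalClosure_coe]
  exact (eqOn_closure h).closure hf hg

theorem normalClosure_mul_inv_le_ker {G : Type*} [Group G] {f : G →* G} (hf : f.comp f = f)
    (s : Set G) : Subgroup.normalClosure ((fun x => f x * x⁻¹) '' s) ≤ f.ker := by
  refine Subgroup.normalClosure_le_normal ?_
  rintro _ ⟨x, -, rfl⟩
  rw [SetLike.mem_coe, mem_ker, map_mul, map_inv, ← comp_apply, hf, mul_inv_cancel]

theorem ker_le_of_mul_inv_mem {G : Type*} [Group G] [TopologicalSpace G] [IsTopologicalGroup G]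
    {f : G →* G} (hf : Continuous f) {X : Set G}
    (hX : (Subgroup.closure X).topologicalClosure = ⊤) {N : Subgroup G} [N.Normal]
    (hN : IsClosed (N : Set G)) (hXN : ∀ x ∈ X, f x * x⁻¹ ∈ N) : f.ker ≤ N := by
  have hmod : Set.EqOn ((QuotientGroup.mk' N).comp f) (QuotientGroup.mk' N)
      (Subgroup.closure X).topologicalClosure :=
    eqOn_topologicalClosure_closure (QuotientGroup.continuous_mk.comp hf)
      QuotientGroup.continuous_mk fun x hx =>
        QuotientGroup.eq_iff_div_mem.mpr (by simpa [div_eq_mul_inv] using hXN x hx)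
  intro g hg
  have hg' : ((f g : G) : G ⧸ N) = g := hmod (hX ▸ Subgroup.mem_top g)
  rw [mem_ker.mp hg] at hg'
  simpa using QuotientGroup.eq_iff_div_mem.mp hg'

end MonoidHom

theorem stmt2_general {F : Type*}
    [Group F] [TopologicalSpace F] [IsTopologicalGroup F]
    [T2Space F]
    (X : Set F) (hX : (Subgroup.closure X).topologicalClosure = ⊤)
    (Φ₀ : F →* F) (hΦ₀_cont : Continuous Φ₀) (hΦ₀_idem : Φ₀.comp Φ₀ = Φ₀) :
    Φ₀.ker = (Subgroup.normalClosure ((fun x => Φ₀ x * x⁻¹) '' X)).topologicalClosure := by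
  have := Subgroup.is_normal_topologicalClosure
    (Subgroup.normalClosure ((fun x => Φ₀ x * x⁻¹) '' X))
  exact le_antisymm
    (Φ₀.ker_le_of_mul_inv_mem hΦ₀_cont hX (Subgroup.isClosed_topologicalClosure _)
      fun x hx => Subgroup.le_topologicalClosure _ (Subgroup.subset_normalClosure ⟨x, hx, rfl⟩))
    (Subgroup.topologicalClosure_minimal _ (Φ₀.normalClosure_mul_inv_le_ker hΦ₀_idem X)
      (isClosed_singleton.preimage hΦ₀_cont))

/-- For a profinite group `F` topologically generated by a subset `X` and a
continuous idempotent endomorphism (retraction) `Φ₀` of `F`, the kernel of `Φ₀` equals the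
smallest closed normal subgroup of `F` containing `{Φ₀(x) * x⁻¹ : x ∈ X}`. -/
theorem stmt2 {F : Type*}
    [Group F] [TopologicalSpace F] [IsTopologicalGroup F]
    [CompactSpace F] [T2Space F] [TotallyDisconnectedSpace F]
    (X : Set F) (hX : (Subgroup.closure X).topologicalClosure = ⊤)
    (Φ₀ : F →* F) (hΦ₀_cont : Continuous Φ₀) (hΦ₀_idem : Φ₀.comp Φ₀ = Φ₀) :
    Φ₀.ker = (Subgroup.normalClosure ((fun x => Φ₀ x * x⁻¹) '' X)).topologicalClosure :=
  stmt2_general X hX Φ₀ hΦ₀_cont hΦ₀_idem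
end
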